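/- Let G = (V, E) be an undirected graph and x ∈ V. Construct a bipartite graph H with parts A = {v_A : v ∈ V} and B = {v_B : v ∈ V}, edges {(u_A, v_B) : (u,v) ∈ E}, plus two extra vertices s (adjacent to all of A) and t (adjacent to all of B). Let S = {s, t} ∪ {v_A : v ∈ N(x)} ∪ {v_B : v ∈ N(x)}, where N(x) is the neighborhood of x in G. Then s and t are connected in the subgraph of H induced by S if and only if x lies in a triangle of G. -/

import Mathlib

/-!
A path from `s` to `t` in the induced graph has to cross from the side `{s} ∪ A` to the side
`B ∪ {t}`, and the only edges between the two sides are the edges `u_A v_B` with `G.Adj u v`.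
If both ends lie in the induced set, then `u` and `v` are neighbours of `x`, so `x u v` is a
triangle. Conversely a triangle `x y z` gives the path `s, y_A, z_B, t`.
-/

namespace SimpleGraph

variable {V : Type*} (G : SimpleGraph V)

open Sum

/-- The graph `H`: the copies `v_A = inl (inl v)` and `v_B = inl (inr v)`, together with
`s = inr false` and `t = inr true`. -/
def stDoubleCover : SimpleGraph ((V ⊕ V) ⊕ Bool) := fromRel fun p q =>
  (∃ u v, G.Adj u v ∧ p = inl (inl u) ∧ q = inl (inr v)) ∨
  (∃ v, p = inr false ∧ q = inl (inl v)) ∨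
  (∃ v, p = inl (inr v) ∧ q = inr true)

def stNeighborSet (x : V) : Set ((V ⊕ V) ⊕ Bool) :=
  {w | w = inr false ∨ w = inr true ∨
    ∃ v, G.Adj x v ∧ (w = inl (inl v) ∨ w = inl (inr v))}

def sourceSide : Set ((V ⊕ V) ⊕ Bool) := {inr false} ∪ Set.range (inl ∘ inl)

variable {G}

lemma stDoubleCover_adj_source_left (v : V) :
    G.stDoubleCover.Adj (inr false) (inl (inl v)) :=
  (fromRel_adj _ _ _).2 ⟨by simp, .inl (.inr (.inl ⟨v, rfl, rfl⟩))⟩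

lemma stDoubleCover_adj_left_right {u v : V} (huv : G.Adj u v) :
    G.stDoubleCover.Adj (inl (inl u)) (inl (inr v)) :=
  (fromRel_adj _ _ _).2 ⟨by simp, .inl (.inl ⟨u, v, huv, rfl, rfl⟩)⟩

lemma stDoubleCover_adj_right_sink (v : V) :
    G.stDoubleCover.Adj (inl (inr v)) (inr true) :=
  (fromRel_adj _ _ _).2 ⟨by simp, .inl (.inr (.inr ⟨v, rfl, rfl⟩))⟩

lemma exists_adj_of_stDoubleCover_adj_of_mem_sourceSide {p q : (V ⊕ V) ⊕ Bool}
    (hpq : G.stDoubleCover.Adj p q) (hp : p ∈ sourceSide) (hq : q ∉ sourceSide) :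
    ∃ u v, G.Adj u v ∧ p = inl (inl u) ∧ q = inl (inr v) := by
  obtain ⟨-, hrel⟩ := (fromRel_adj _ _ _).1 hpq
  rcases hrel with (h | ⟨v, rfl, rfl⟩ | ⟨v, rfl, rfl⟩) |
    (⟨u, v, _, rfl, rfl⟩ | ⟨v, rfl, rfl⟩ | ⟨v, rfl, rfl⟩)
  · exact h
  all_goals simp [sourceSide] at hp hq

lemma adj_of_inl_inl_mem_stNeighborSet {x v : V} (h : inl (inl v) ∈ G.stNeighborSet x) :
    G.Adj x v := by
  obtain ⟨w, hxw, hw | hw⟩ := h.resolve_left (by simp) |>.resolve_left (by simp) <;>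
    simp_all

lemma adj_of_inl_inr_mem_stNeighborSet {x v : V} (h : inl (inr v) ∈ G.stNeighborSet x) :
    G.Adj x v := by
  obtain ⟨w, hxw, hw | hw⟩ := h.resolve_left (by simp) |>.resolve_left (by simp) <;>
    simp_all

variable (G)

lemma source_mem_stNeighborSet (x : V) : inr false ∈ G.stNeighborSet x := .inl rfl

lemma sink_mem_stNeighborSet (x : V) : inr true ∈ G.stNeighborSet x := .inr (.inl rfl)

variable {G}

lemma exists_triangle_of_reachable_source_sink {x : V}
    (h : (G.stDoubleCover.induce (G.stNeighborSet x)).Reachable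
      ⟨inr false, G.source_mem_stNeighborSet x⟩ ⟨inr true, G.sink_mem_stNeighborSet x⟩) :
    ∃ y z, G.Adj x y ∧ G.Adj y z ∧ G.Adj z x := by
  obtain ⟨w⟩ := h
  obtain ⟨d, -, hfst, hsnd⟩ :=
    w.exists_boundary_dart {p | p.val ∈ sourceSide} (by simp [sourceSide]) (by simp [sourceSide])
  obtain ⟨u, v, huv, hu, hv⟩ :=
    exists_adj_of_stDoubleCover_adj_of_mem_sourceSide (G := G) (p := d.fst) (q := d.snd)
      (induce_adj.1 d.adj) hfst hsnd
  have hxu := adj_of_inl_inl_mem_stNeighborSet (hu ▸ d.fst.property)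
  have hxv := adj_of_inl_inr_mem_stNeighborSet (hv ▸ d.snd.property)
  exact ⟨u, v, hxu, huv, hxv.symm⟩

lemma reachable_source_sink_of_triangle {x y z : V} (hxy : G.Adj x y) (hyz : G.Adj y z)
    (hzx : G.Adj z x) :
    (G.stDoubleCover.induce (G.stNeighborSet x)).Reachable
      ⟨inr false, G.source_mem_stNeighborSet x⟩ ⟨inr true, G.sink_mem_stNeighborSet x⟩ := by
  have hy : inl (inl y) ∈ G.stNeighborSet x := .inr (.inr ⟨y, hxy, .inl rfl⟩)
  have hz : inl (inr z) ∈ G.stNeighborSet x := .inr (.inr ⟨z, hzx.symm, .inr rfl⟩)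
  have hsy : (G.stDoubleCover.induce _).Adj ⟨_, G.source_mem_stNeighborSet x⟩ ⟨_, hy⟩ :=
    stDoubleCover_adj_source_left y
  have hyz_cover : (G.stDoubleCover.induce _).Adj ⟨_, hy⟩ ⟨_, hz⟩ :=
    stDoubleCover_adj_left_right hyz
  have hzt : (G.stDoubleCover.induce _).Adj ⟨_, hz⟩ ⟨_, G.sink_mem_stNeighborSet x⟩ :=
    stDoubleCover_adj_right_sink z
  exact hsy.reachable.trans (hyz_cover.reachable.trans hzt.reachable)

end SimpleGraph

theorem stmt_3 {V : Type*} (G : SimpleGraph V) (x : V) :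
    let H : SimpleGraph ((V ⊕ V) ⊕ Bool) := SimpleGraph.fromRel (fun p q =>
      (∃ u v, G.Adj u v ∧ p = Sum.inl (Sum.inl u) ∧ q = Sum.inl (Sum.inr v)) ∨
      (∃ v, p = Sum.inr false ∧ q = Sum.inl (Sum.inl v)) ∨
      (∃ v, p = Sum.inl (Sum.inr v) ∧ q = Sum.inr true))
    let S : Set ((V ⊕ V) ⊕ Bool) := {w | w = Sum.inr false ∨ w = Sum.inr true ∨
      ∃ v, G.Adj x v ∧ (w = Sum.inl (Sum.inl v) ∨ w = Sum.inl (Sum.inr v))}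
    (H.induce S).Reachable ⟨Sum.inr false, Or.inl rfl⟩ ⟨Sum.inr true, Or.inr (Or.inl rfl)⟩ ↔
      ∃ y z, G.Adj x y ∧ G.Adj y z ∧ G.Adj z x :=
  ⟨SimpleGraph.exists_triangle_of_reachable_source_sink,
    fun ⟨_, _, hxy, hyz, hzx⟩ => SimpleGraph.reachable_source_sink_of_triangle hxy hyz hzx⟩
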